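/- A Rotfel'd-type determinant inequality: Let K, K₁, K₂, …, K_m be positive-definite real d×d matrices. Then det(K + K₁ + ⋯ + K_m) · det(K)^{m−1} ≤ ∏_{j=1}^m det(K + K_j); equivalently, det(K + K₁ + ⋯ + K_m) ≤ det(K)^{−(m−1)} · ∏_{j=1}^m det(K + K_j). -/

import Mathlib

/-!
For `A` positive definite and `C` positive semidefinite, the Weinstein–Aronszajn identity gives
`det (A + C) = det A * det (1 + √C * A⁻¹ * √C)`. Inversion is operator antitone and the
determinant is monotone in the Loewner order, so the factor `det (A + C) / det A` decreases as
`A` increases. Comparing `A` with `A + B` gives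
`det (A + B + C) * det A ≤ det (A + B) * det (A + C)`,
and induction on the number of summands gives the theorem.
-/

open scoped MatrixOrder

namespace Matrix

variable {n : Type*} [Fintype n] [DecidableEq n]

theorem det_add_mul_self {R : Type*} [CommRing R] {A : Matrix n n R} (hA : IsUnit A.det)
    (T : Matrix n n R) : (A + T * T).det = A.det * (1 + T * A⁻¹ * T).det := by
  have hfac : A + T * T = A * (1 + A⁻¹ * T * T) := by
    rw [Matrix.mul_add, Matrix.mul_one, ← Matrix.mul_assoc, ← Matrix.mul_assoc,
      Matrix.mul_nonsing_inv _ hA, Matrix.one_mul]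
  rw [hfac, det_mul, det_one_add_mul_comm, Matrix.mul_assoc]

theorem PosSemidef.one_le_det_one_add {P : Matrix n n ℝ} (hP : P.PosSemidef) :
    1 ≤ (1 + P).det := by
  have hH : (1 + P).IsHermitian := isHermitian_one.add hP.isHermitian
  have hspec : spectrum ℝ (1 + P) = (1 + ·) '' spectrum ℝ P := by
    rw [← Set.singleton_add, spectrum.singleton_add_eq, map_one]
  rw [hH.det_eq_prod_eigenvalues]
  refine Finset.one_le_prod fun i _ => ?_
  obtain ⟨μ, hμ, hμi⟩ := hspec ▸ hH.eigenvalues_mem_spectrum_real i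
  have : 0 ≤ μ := (posSemidef_iff_isHermitian_and_spectrum_nonneg.mp hP).2 hμ
  simp only [RCLike.ofReal_real_eq_id, id_eq, ← hμi]
  linarith

theorem PosDef.det_add_eq_det_mul_det_one_add_sqrt {A C : Matrix n n ℝ} (hA : A.PosDef)
    (hC : C.PosSemidef) :
    (A + C).det = A.det * (1 + CFC.sqrt C * A⁻¹ * CFC.sqrt C).det := by
  rw [← det_add_mul_self hA.det_pos.ne'.isUnit, CFC.sqrt_mul_sqrt_self C hC.nonneg]

theorem PosDef.det_le_det {A B : Matrix n n ℝ} (hA : A.PosDef) (hAB : A ≤ B) :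
    A.det ≤ B.det := by
  have hBA : (B - A).PosSemidef := le_iff.mp hAB
  have hconj : (CFC.sqrt (B - A) * A⁻¹ * CFC.sqrt (B - A)).PosSemidef :=
    nonneg_iff_posSemidef.mp <|
      conjugate_nonneg_of_nonneg hA.inv.posSemidef.nonneg (CFC.sqrt_nonneg _)
  calc A.det ≤ A.det * (1 + CFC.sqrt (B - A) * A⁻¹ * CFC.sqrt (B - A)).det :=
        le_mul_of_one_le_right hA.det_pos.le hconj.one_le_det_one_add
    _ = B.det := by rw [← hA.det_add_eq_det_mul_det_one_add_sqrt hBA, add_sub_cancel]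

/-- Operator antitonicity of the inverse, from two Schur complements of `[[B, 1], [1, A⁻¹]]`. -/
theorem PosDef.inv_le_inv {A B : Matrix n n ℝ} (hA : A.PosDef) (hAB : A ≤ B) :
    B⁻¹ ≤ A⁻¹ := by
  have hB : B.PosDef := by simpa using hA.add_posSemidef (le_iff.mp hAB)
  have := hA.inv.isUnit.invertible
  have := hB.isUnit.invertible
  have hblock : (fromBlocks B 1 1ᴴ A⁻¹).PosSemidef := by
    refine (PosDef.fromBlocks₂₂ B 1 hA.inv).mpr ?_
    simpa [nonsing_inv_nonsing_inv _ hA.det_pos.ne'.isUnit] using le_iff.mp hAB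
  simpa [le_iff] using (PosDef.fromBlocks₁₁ 1 A⁻¹ hB).mp hblock

theorem PosDef.det_add_add_mul_det_le {A B C : Matrix n n ℝ} (hA : A.PosDef)
    (hB : B.PosSemidef) (hC : C.PosSemidef) :
    (A + B + C).det * A.det ≤ (A + B).det * (A + C).det := by
  set T := CFC.sqrt C
  have hT : IsSelfAdjoint T := .of_nonneg (CFC.sqrt_nonneg C)
  have hAB : (A + B).PosDef := hA.add_posSemidef hB
  have hconj : 1 + T * (A + B)⁻¹ * T ≤ 1 + T * A⁻¹ * T :=
    add_le_add_right (hT.conjugate_le_conjugate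
      (hA.inv_le_inv (le_add_of_nonneg_right hB.nonneg))) 1
  have hpos : (1 + T * (A + B)⁻¹ * T).PosDef :=
    PosDef.one.add_posSemidef <| nonneg_iff_posSemidef.mp <|
      conjugate_nonneg_of_nonneg hAB.inv.posSemidef.nonneg (CFC.sqrt_nonneg C)
  calc (A + B + C).det * A.det = (A + B).det * (1 + T * (A + B)⁻¹ * T).det * A.det := by
        rw [hAB.det_add_eq_det_mul_det_one_add_sqrt hC]
    _ ≤ (A + B).det * (1 + T * A⁻¹ * T).det * A.det :=
        mul_le_mul_of_nonneg_right
          (mul_le_mul_of_nonneg_left (hpos.det_le_det hconj) hAB.det_pos.le) hA.det_pos.le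
    _ = (A + B).det * (A + C).det := by
        rw [hA.det_add_eq_det_mul_det_one_add_sqrt hC]; ring

theorem PosDef.det_add_sum_mul_det_pow_le {ι : Type*} {K : Matrix n n ℝ}
    {Ks : ι → Matrix n n ℝ} (hK : K.PosDef) (hKs : ∀ j, (Ks j).PosSemidef) (s : Finset ι) :
    (K + ∑ j ∈ s, Ks j).det * K.det ^ s.card ≤ K.det * ∏ j ∈ s, (K + Ks j).det := by
  classical
  induction s using Finset.induction_on with
  | empty => simp
  | insert a s ha ih =>
    have hsum : (∑ j ∈ s, Ks j).PosSemidef := posSemidef_sum s fun j _ => hKs j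
    rw [Finset.sum_insert ha, Finset.prod_insert ha, Finset.card_insert_of_notMem ha, pow_succ,
      add_comm (Ks a), ← add_assoc]
    calc (K + ∑ j ∈ s, Ks j + Ks a).det * (K.det ^ s.card * K.det)
        = (K + ∑ j ∈ s, Ks j + Ks a).det * K.det * K.det ^ s.card := by ring
      _ ≤ (K + ∑ j ∈ s, Ks j).det * (K + Ks a).det * K.det ^ s.card :=
        mul_le_mul_of_nonneg_right (hK.det_add_add_mul_det_le hsum (hKs a))
          (pow_nonneg hK.det_pos.le _)
      _ = (K + Ks a).det * ((K + ∑ j ∈ s, Ks j).det * K.det ^ s.card) := by ring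
      _ ≤ (K + Ks a).det * (K.det * ∏ j ∈ s, (K + Ks j).det) :=
        mul_le_mul_of_nonneg_left ih (hK.add_posSemidef (hKs a)).det_pos.le
      _ = K.det * ((K + Ks a).det * ∏ j ∈ s, (K + Ks j).det) := by ring

end Matrix

/-- **A Rotfel'd-type determinant inequality.**
For positive-definite `d × d` real matrices `K, K₁, …, K_m` (`m ≥ 1`),
`det(K + K₁ + ⋯ + K_m) · det(K)^{m-1} ≤ ∏ j, det(K + K_j)`. -/
theorem rotfeld_type_det_inequality
    {d m : ℕ} (hm : 0 < m)
    (K : Matrix (Fin d) (Fin d) ℝ) (Ks : Fin m → Matrix (Fin d) (Fin d) ℝ)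
    (hK : K.PosDef) (hKs : ∀ j, (Ks j).PosDef) :
    (K + ∑ j, Ks j).det * K.det ^ (m - 1) ≤ ∏ j, (K + Ks j).det := by
  have h := hK.det_add_sum_mul_det_pow_le (fun j => (hKs j).posSemidef) Finset.univ
  have hpow : K.det ^ m = K.det * K.det ^ (m - 1) := by
    rw [← pow_succ', Nat.sub_one_add_one hm.ne']
  rw [Finset.card_univ, Fintype.card_fin, hpow, mul_left_comm] at h
  exact le_of_mul_le_mul_left h hK.det_pos
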